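/- Let (G,λ) be a temporal graph with lifetime τ in which no two parallel edges are active at the same timestep, let s,z ∈ V(G) be distinct, and let k ≥ 1. Put F = E(G) ∪ {s,z} and extend λ by λ(s) = 0 and λ(z) = τ+1. Let M be the digraph on vertex set F with arcs: (s,f) for every f ∈ E(G) incident to s; (e,f) for every pair of distinct edges e,f ∈ E(G) sharing an endpoint and satisfying λ(e) ≤ λ(f); and (e,z) for every e ∈ E(G) incident to z. Let D be the digraph with V(D) = {(u₁,…,u_k) ∈ F^k : for all i ≠ j, λ(u_i) ≠ λ(u_j) or u_i = u_j ∈ {s,z}}, and with an arc from α = (u₁,…,u_k) to β if and only if β differs from α in exactly one coordinate i, λ(u_i) ≤ λ(u_j) for every j ∈ [k], and (u_i, β_i) is an arc of M, where β_i is the i-th coordinate of β. Then (G,λ) contains k pairwise snapshot disjoint temporal s,z-paths if and only if D contains a directed path from (s,…,s) to (z,…,z). -/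

import Mathlib

/-- A (finite, loopless) multigraph: a vertex type, an edge type, and an
endpoints function assigning to each edge an unordered pair of distinct vertices. -/
structure Multigraph where
  V : Type
  E : Type
  fintypeV : Fintype V
  decEqV : DecidableEq V
  fintypeE : Fintype E
  decEqE : DecidableEq E
  ends : E → Sym2 V
  loopless : ∀ e, ¬ (ends e).IsDiag

attribute [instance] Multigraph.fintypeV Multigraph.decEqV Multigraph.fintypeE Multigraph.decEqE

/-- A temporal `s,z`-path in the temporal graph `(G, lam)`: an alternating sequence of
pairwise distinct vertices and edges, starting at `s`, ending at `z`, whose edges appear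
at non-decreasing timesteps. -/
structure TPath (G : Multigraph) (lam : G.E → ℕ) (s z : G.V) where
  verts : List G.V
  edges : List G.E
  len_eq : verts.length = edges.length + 1
  head_eq : verts.head? = some s
  last_eq : verts.getLast? = some z
  nodup : verts.Nodup
  ends_eq : ∀ (i : ℕ) (h : i < edges.length),
      G.ends (edges.get ⟨i, h⟩) = s(verts.get ⟨i, by omega⟩, verts.get ⟨i + 1, by omega⟩)
  mono : List.Chain' (· ≤ ·) (edges.map lam)

/-- The set of timesteps at which a temporal path is active. -/
def TPath.times {G : Multigraph} {lam : G.E → ℕ} {s z : G.V} (P : TPath G lam s z) : Set ℕ :=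
  {t | ∃ e ∈ P.edges, lam e = t}

/-- Two temporal `s,z`-paths are snapshot disjoint if they are not both active at any
common timestep. -/
def SnapDisjoint {G : Multigraph} {lam : G.E → ℕ} {s z : G.V} (P Q : TPath G lam s z) : Prop :=
  P.times ∩ Q.times = ∅

/-- A set `S` of timesteps is a snapshot `s,z`-cut if every temporal `s,z`-path uses an
edge active at some timestep in `S`. -/
def IsSnapCut (G : Multigraph) (lam : G.E → ℕ) (s z : G.V) (S : Set ℕ) : Prop :=
  ∀ P : TPath G lam s z, ∃ e ∈ P.edges, lam e ∈ S

/-- `maxD G lam s z`: the maximum number of pairwise snapshot disjoint temporal `s,z`-paths. -/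
noncomputable def maxD (G : Multigraph) (lam : G.E → ℕ) (s z : G.V) : ℕ :=
  sSup {k | ∃ f : Fin k → TPath G lam s z, ∀ i j, i ≠ j → SnapDisjoint (f i) (f j)}

/-- `minC G lam s z`: the minimum size of a snapshot `s,z`-cut. -/
noncomputable def minC (G : Multigraph) (lam : G.E → ℕ) (s z : G.V) : ℕ :=
  sInf {h | ∃ S : Finset ℕ, S.card = h ∧ IsSnapCut G lam s z ↑S}

/-- A proper timefunction: each edge is active at a positive timestep, and no two parallel
edges are active at the same timestep. -/
def ProperTime (G : Multigraph) (lam : G.E → ℕ) : Prop :=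
  (∀ e, 0 < lam e) ∧ ∀ e f, e ≠ f → G.ends e = G.ends f → lam e ≠ lam f

/-- `G` is Mengerian for time: for every proper timefunction and every pair of distinct
vertices, the maximum number of pairwise snapshot disjoint temporal `s,z`-paths equals the
minimum size of a snapshot `s,z`-cut. -/
def Mengerian (G : Multigraph) : Prop :=
  ∀ lam : G.E → ℕ, ProperTime G lam → ∀ s z : G.V, s ≠ z →
    maxD G lam s z = minC G lam s z

/-- `H` is a subgraph of `G` (up to isomorphism): `H` embeds into `G`. -/
def IsSubgraph (H G : Multigraph) : Prop :=
  ∃ (fv : H.V → G.V) (fe : H.E → G.E),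
    Function.Injective fv ∧ Function.Injective fe ∧
    ∀ e, G.ends (fe e) = (H.ends e).map fv

/-- The m-subdivision of the multiedge `xy` of `G`: delete all edges between `x` and `y`,
add a new vertex (`none`), and join it to each of `x` and `y` by as many parallel edges as
there were between `x` and `y`. -/
def Multigraph.msubdiv (G : Multigraph) (x y : G.V) : Multigraph where
  V := Option G.V
  E := {e : G.E // G.ends e ≠ s(x, y)} ⊕ ({e : G.E // G.ends e = s(x, y)} × Bool)
  fintypeV := inferInstance
  decEqV := inferInstance
  fintypeE := inferInstance
  decEqE := inferInstance
  ends := fun t =>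
    match t with
    | .inl e => (G.ends e.1).map some
    | .inr (_, true) => s(some x, (none : Option G.V))
    | .inr (_, false) => s((none : Option G.V), some y)
  loopless := by
    rintro (⟨e, he⟩ | ⟨e, b⟩)
    · simpa [Sym2.isDiag_map (Option.some_injective _)] using G.loopless e
    · cases b <;> simp [Sym2.mk_isDiag_iff]

/-- Isomorphism of multigraphs. -/
def MIso (G H : Multigraph) : Prop :=
  ∃ (fv : G.V ≃ H.V) (fe : G.E ≃ H.E), ∀ e, H.ends (fe e) = (G.ends e).map fv

/-- `B` is obtained from `A` by m-subdividing one of its multiedges. -/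
def SubdivStep (A B : Multigraph) : Prop :=
  ∃ x y : A.V, (∃ e, A.ends e = s(x, y)) ∧ MIso (A.msubdiv x y) B

/-- `H` is an m-topological minor of `G`: some subgraph of `G` can be obtained from `H` by
a sequence of m-subdivisions. -/
def IsMTopMinor (H G : Multigraph) : Prop :=
  ∃ K, Relation.ReflTransGen SubdivStep H K ∧ IsSubgraph K G

/-- The multigraph obtained from `G` by keeping only the edges satisfying `P`. -/
def Multigraph.restrictE (G : Multigraph) (P : G.E → Prop) [DecidablePred P] : Multigraph where
  V := G.V
  E := {e : G.E // P e}
  fintypeV := G.fintypeV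
  decEqV := G.decEqV
  fintypeE := inferInstance
  decEqE := inferInstance
  ends := fun e => G.ends e.1
  loopless := fun e => G.loopless e.1

/-- The underlying simple graph of a multigraph. -/
def Multigraph.simple (G : Multigraph) : SimpleGraph G.V where
  Adj u v := ∃ e, G.ends e = s(u, v)
  symm := by
    constructor
    rintro u v ⟨e, he⟩
    exact ⟨e, by rw [he, Sym2.eq_swap]⟩
  loopless := by
    constructor
    rintro u ⟨e, he⟩
    exact G.loopless e (by rw [he]; exact Sym2.mk_isDiag_iff.2 rfl)


/-- The extension of the timefunction to `F = E(G) ∪ {s, z}`, where the `s`-marker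
(`Sum.inr false`) gets time `0` and the `z`-marker (`Sum.inr true`) gets time `τ + 1`. -/
def lamF (G : Multigraph) (lam : G.E → ℕ) : G.E ⊕ Bool → ℕ
  | .inl e => lam e
  | .inr false => 0
  | .inr true => Finset.univ.sup lam + 1

/-- The arcs of the auxiliary digraph `M` on `F = E(G) ∪ {s, z}`. -/
def MArc (G : Multigraph) (lam : G.E → ℕ) (s z : G.V) :
    G.E ⊕ Bool → G.E ⊕ Bool → Prop
  | .inr false, .inl f => s ∈ G.ends f
  | .inl e, .inl f => e ≠ f ∧ (∃ u, u ∈ G.ends e ∧ u ∈ G.ends f) ∧ lam e ≤ lam f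
  | .inl e, .inr true => z ∈ G.ends e
  | _, _ => False

/-- Membership in the vertex set of the digraph `D`: a `k`-tuple over `F` all of whose
coordinates have distinct times, except for repeated `s`- or `z`-markers. -/
def InVD (G : Multigraph) (lam : G.E → ℕ) {k : ℕ} (u : Fin k → G.E ⊕ Bool) : Prop :=
  ∀ i j, i ≠ j →
    lamF G lam (u i) ≠ lamF G lam (u j) ∨ (u i = u j ∧ ∃ b, u i = Sum.inr b)

/-- The arcs of the digraph `D` (between vertices of `D`): exactly one coordinate `i`
changes, coordinate `i` has minimum time, and the change is an arc of `M`. -/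
def DArc (G : Multigraph) (lam : G.E → ℕ) (s z : G.V) {k : ℕ}
    (u w : Fin k → G.E ⊕ Bool) : Prop :=
  InVD G lam u ∧ InVD G lam w ∧
  ∃ i, (∀ j, j ≠ i → w j = u j) ∧ w i ≠ u i ∧
    (∀ j, lamF G lam (u i) ≤ lamF G lam (u j)) ∧ MArc G lam s z (u i) (w i)

/-! Forward: run the `k` paths simultaneously along their tracks `s, e₁, …, e_q, z` in `M`,
always advancing a coordinate of minimum time; snapshot disjointness makes every intermediate
tuple a vertex of `D`, and the sum of the remaining track lengths decreases.

Backward: along a walk of `D` from `(s, …, s)` every coordinate traces a walk of `M`, and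
such a walk can be shortcut to a temporal `s,z`-path using only its edges. Two coordinates
never use a common time `t`: if `j` leaves an edge of time `t` then `t` is the minimum of the
tuple at that moment, and since times only grow along arcs of `M`, a later edge of time `t`
in another coordinate `i` would mean that `i` already sits at time `t` next to `j`, which the
vertex condition of `D` forbids. -/

section ExtendedTime

variable {G : Multigraph} {lam : G.E → ℕ} {s z : G.V}

lemma lam_le_sup (e : G.E) : lam e ≤ Finset.univ.sup lam :=
  Finset.le_sup (Finset.mem_univ e)

lemma lamF_le_sup_add_one (x : G.E ⊕ Bool) : lamF G lam x ≤ Finset.univ.sup lam + 1 := by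
  rcases x with e | _ | _
  · exact (lam_le_sup e).trans (Nat.le_succ _)
  · exact Nat.zero_le _
  · exact le_rfl

lemma eq_inr_of_lamF_eq (hpos : ∀ e, 0 < lam e) {x : G.E ⊕ Bool} {b : Bool}
    (h : lamF G lam x = lamF G lam (.inr b)) : x = .inr b := by
  rcases x with e | _ | _
  · cases b
    · exact absurd h (hpos e).ne'
    · exact absurd h (Nat.lt_succ_of_le (lam_le_sup e)).ne
  all_goals cases b <;> simp_all [lamF]

lemma MArc.lamF_le {a b : G.E ⊕ Bool} (h : MArc G lam s z a b) :
    lamF G lam a ≤ lamF G lam b := by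
  rcases a with e | _ | _ <;> rcases b with f | _ | _ <;> simp only [MArc] at h
  · exact h.2.2
  · exact lamF_le_sup_add_one _
  · exact Nat.zero_le _

lemma MArc.ne {a b : G.E ⊕ Bool} (h : MArc G lam s z a b) : a ≠ b := by
  rintro rfl
  rcases a with e | _ | _ <;> simp [MArc] at h

end ExtendedTime

namespace TPath

variable {G : Multigraph} {lam : G.E → ℕ} {s v z : G.V}

lemma length_verts_pos (P : TPath G lam s v) : 0 < P.verts.length := by
  have := P.len_eq; omega

lemma getElem_verts_zero (P : TPath G lam s v) : P.verts[0]'P.length_verts_pos = s := by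
  have h := P.head_eq
  rw [List.head?_eq_getElem?, List.getElem?_eq_getElem P.length_verts_pos] at h
  exact Option.some_injective _ h

lemma getElem_verts_length_edges (P : TPath G lam s v) :
    P.verts[P.edges.length]'(by have := P.len_eq; omega) = v := by
  have h := P.last_eq
  rw [List.getLast?_eq_getElem?, P.len_eq, Nat.add_sub_cancel,
    List.getElem?_eq_getElem (by have := P.len_eq; omega)] at h
  exact Option.some_injective _ h

lemma ends_getElem_edges (P : TPath G lam s v) (i : ℕ) (h : i < P.edges.length) :
    G.ends P.edges[i] = s(P.verts[i]'(by have := P.len_eq; omega),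
      P.verts[i + 1]'(by have := P.len_eq; omega)) :=
  P.ends_eq i h

lemma edges_ne_nil (P : TPath G lam s z) (hsz : s ≠ z) : P.edges ≠ [] := by
  intro h
  have h0 := P.getElem_verts_length_edges
  simp only [h, List.length_nil] at h0
  exact hsz (P.getElem_verts_zero.symm.trans h0)

def nil (s : G.V) : TPath G lam s s where
  verts := [s]
  edges := []
  len_eq := rfl
  head_eq := rfl
  last_eq := rfl
  nodup := List.nodup_singleton s
  ends_eq := fun _ h => absurd h (Nat.not_lt_zero _)
  mono := List.IsChain.nil

lemma exists_of_mem_verts (P : TPath G lam s v) {w : G.V} (hw : w ∈ P.verts) :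
    ∃ Q : TPath G lam s w, Q.edges ⊆ P.edges := by
  obtain ⟨m, hm, rfl⟩ := List.mem_iff_getElem.1 hw
  have hlen := P.len_eq
  refine ⟨⟨P.verts.take (m + 1), P.edges.take m, by simp; omega, ?_, ?_, ?_, ?_, ?_⟩,
    (List.take_sublist _ _).subset⟩
  · simp [List.head?_take, P.head_eq]
  · rw [List.getLast?_eq_getElem?]
    simp [hm]
  · exact (List.take_sublist _ _).nodup P.nodup
  · intro i h
    simp only [List.length_take] at h
    simpa using P.ends_getElem_edges i (by omega)
  · rw [List.map_take]
    exact P.mono.sublist (List.take_sublist _ _)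

lemma exists_concat (P : TPath G lam s v) {e : G.E} {w : G.V} (he : G.ends e = s(v, w))
    (hw : w ∉ P.verts) (hle : ∀ x ∈ P.edges, lam x ≤ lam e) :
    ∃ Q : TPath G lam s w, Q.edges = P.edges ++ [e] := by
  have hlen := P.len_eq
  refine ⟨⟨P.verts ++ [w], P.edges ++ [e], by simp [hlen], ?_, ?_, ?_, ?_, ?_⟩, rfl⟩
  · rw [List.head?_append, P.head_eq]; rfl
  · exact List.getLast?_concat
  · exact List.nodup_append.2 ⟨P.nodup, List.nodup_singleton _, by
      rintro a ha b hb rfl; exact hw (by simpa [List.mem_singleton.1 hb] using ha)⟩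
  · intro i hi
    simp only [List.length_append, List.length_singleton] at hi
    simp only [List.get_eq_getElem, List.getElem_append]
    rcases lt_or_eq_of_le (Nat.le_of_lt_succ hi) with hi | rfl
    · simp only [hi, dif_pos, show i < P.verts.length by omega,
        show i + 1 < P.verts.length by omega]
      exact P.ends_getElem_edges i hi
    · simpa [show P.edges.length < P.verts.length by omega, hlen,
        P.getElem_verts_length_edges] using he
  · rw [List.map_append]
    refine List.isChain_append.2 ⟨P.mono, List.IsChain.singleton _, ?_⟩
    intro x hx y hy
    obtain ⟨a, ha, rfl⟩ := List.mem_map.1 (List.mem_of_mem_getLast? hx)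
    simp only [List.map_cons, List.map_nil, List.head?_cons, Option.mem_def,
      Option.some.injEq] at hy
    exact hy ▸ hle a ha

lemma exists_of_mem_ends (P : TPath G lam s v) {e : G.E} {w : G.V} (hv : v ∈ G.ends e)
    (hw : w ∈ G.ends e) (hle : ∀ x ∈ P.edges, lam x ≤ lam e) :
    ∃ Q : TPath G lam s w, ∀ x ∈ Q.edges, x ∈ P.edges ∨ x = e := by
  by_cases hwP : w ∈ P.verts
  · obtain ⟨Q, hQ⟩ := P.exists_of_mem_verts hwP
    exact ⟨Q, fun x hx => Or.inl (hQ hx)⟩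
  have hvw : v ≠ w := by
    rintro rfl
    exact hwP (by simpa [P.getElem_verts_length_edges] using
      List.getElem_mem (l := P.verts) (n := P.edges.length) (by have := P.len_eq; omega))
  obtain ⟨Q, hQ⟩ := P.exists_concat ((Sym2.mem_and_mem_iff hvw).1 ⟨hv, hw⟩) hwP hle
  exact ⟨Q, fun x hx => by simpa [hQ] using hx⟩

def track (P : TPath G lam s z) : List (G.E ⊕ Bool) :=
  Sum.inr false :: (P.edges.map Sum.inl ++ [Sum.inr true])

lemma mArc_getElem_edges (P : TPath G lam s z) (i : ℕ) (hi : i + 1 < P.edges.length) :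
    MArc G lam s z (.inl P.edges[i]) (.inl P.edges[i + 1]) := by
  have hlen := P.len_eq
  refine ⟨fun h => ?_, ⟨P.verts[i + 1], ?_, ?_⟩, ?_⟩
  · have h := congrArg G.ends h
    rw [P.ends_getElem_edges, P.ends_getElem_edges, Sym2.eq_iff] at h
    rcases h with ⟨h, -⟩ | ⟨h, -⟩ <;> have := (P.nodup.getElem_inj_iff).1 h <;> omega
  · simp [P.ends_getElem_edges i (by omega)]
  · simp [P.ends_getElem_edges (i + 1) hi]
  · have := P.mono.getElem i (by simpa using hi)
    simp only [List.getElem_map] at this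
    exact this

lemma isChain_track (P : TPath G lam s z) (hsz : s ≠ z) : P.track.IsChain (MArc G lam s z) := by
  have hne := P.edges_ne_nil hsz
  have hlen := P.len_eq
  have hpos : 0 < P.edges.length := List.length_pos_iff.2 hne
  refine List.isChain_cons.2 ⟨?_, List.isChain_append.2 ⟨?_, List.IsChain.singleton _, ?_⟩⟩
  · intro y hy
    rw [List.head?_append_of_ne_nil _ (by simpa using hne), List.head?_map,
      List.head?_eq_getElem?, List.getElem?_eq_getElem hpos] at hy
    simp only [Option.map_some, Option.mem_def, Option.some.injEq] at hy
    subst hy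
    show s ∈ G.ends P.edges[0]
    simp [P.ends_getElem_edges 0 hpos, P.getElem_verts_zero]
  · exact (List.isChain_map _).2 (List.isChain_iff_getElem.2 P.mArc_getElem_edges)
  · intro x hx y hy
    simp only [List.head?_cons, Option.mem_def, Option.some.injEq] at hy
    subst hy
    rw [List.getLast?_map, List.getLast?_eq_getElem?, List.getElem?_eq_getElem (by omega)] at hx
    simp only [Option.map_some, Option.mem_def, Option.some.injEq] at hx
    subst hx
    show z ∈ G.ends _
    rw [P.ends_getElem_edges _ (by omega)]
    simp [show P.edges.length - 1 + 1 = P.edges.length by omega, P.getElem_verts_length_edges]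

lemma length_track (P : TPath G lam s z) : P.track.length = P.edges.length + 2 := by
  simp [track]

lemma getLast_track (P : TPath G lam s z) :
    P.track[P.edges.length + 1]'(by rw [length_track]; omega) = .inr true := by
  simp [track, List.getElem_cons]

lemma lt_length_track_of_getD_ne (P : TPath G lam s z) {n : ℕ}
    (h : P.track.getD n (.inr true) ≠ .inr true) : n + 1 < P.track.length := by
  by_contra hn
  rcases Nat.lt_or_ge n P.track.length with hlt | hge
  · rw [List.getD_eq_getElem _ _ hlt, getElem_congr_idx (show n = P.edges.length + 1 by
      rw [length_track] at hn hlt; omega)] at h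
    exact h P.getLast_track
  · exact h (List.getD_eq_default _ _ hge)

lemma mem_edges_of_getD_track (P : TPath G lam s z) {n : ℕ} {e : G.E}
    (h : P.track.getD n (.inr true) = .inl e) : e ∈ P.edges := by
  rcases Nat.lt_or_ge n P.track.length with hlt | hge
  · rw [List.getD_eq_getElem _ _ hlt] at h
    have := h ▸ List.getElem_mem hlt
    simpa [track] using this
  · rw [List.getD_eq_default _ _ hge] at h
    exact absurd h (by simp)

end TPath

section Forward

variable {G : Multigraph} {lam : G.E → ℕ} {s z : G.V} {k : ℕ}

lemma inVD_of_snapDisjoint (hpos : ∀ e, 0 < lam e) {P : Fin k → TPath G lam s z}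
    (hP : ∀ i j, i ≠ j → SnapDisjoint (P i) (P j)) {u : Fin k → G.E ⊕ Bool}
    (hu : ∀ j e, u j = .inl e → e ∈ (P j).edges) : InVD G lam u := by
  intro i j hij
  refine or_iff_not_imp_left.2 fun h => ?_
  rw [not_ne_iff] at h
  rcases hi : u i with e | b
  · rcases hj : u j with g | c
    · have hdisj := Set.eq_empty_iff_forall_notMem.1 (hP i j hij) (lam e)
      rw [hi, hj] at h
      exact absurd ⟨⟨e, hu i e hi, rfl⟩, ⟨g, hu j g hj, h.symm⟩⟩ hdisj
    · rw [hi, hj] at h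
      exact absurd (eq_inr_of_lamF_eq hpos h) (by simp)
  · rw [hi] at h
    exact ⟨(eq_inr_of_lamF_eq hpos h.symm).symm, b, rfl⟩

/-- Positions beyond the end of a track read as the `z`-marker. -/
def trackState (P : Fin k → TPath G lam s z) (p : Fin k → ℕ) : Fin k → G.E ⊕ Bool :=
  fun j => (P j).track.getD (p j) (.inr true)

lemma dArc_trackState (hpos : ∀ e, 0 < lam e) (hsz : s ≠ z) {P : Fin k → TPath G lam s z}
    (hP : ∀ i j, i ≠ j → SnapDisjoint (P i) (P j)) (p : Fin k → ℕ) {i : Fin k}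
    (hi : trackState P p i ≠ .inr true)
    (hmin : ∀ j, lamF G lam (trackState P p i) ≤ lamF G lam (trackState P p j)) :
    DArc G lam s z (trackState P p) (trackState P (Function.update p i (p i + 1))) := by
  have hlt := (P i).lt_length_track_of_getD_ne hi
  have hM : MArc G lam s z (trackState P p i) (trackState P (Function.update p i (p i + 1)) i) := by
    simp only [trackState, Function.update_self, List.getD_eq_getElem _ _ hlt,
      List.getD_eq_getElem _ _ (Nat.lt_of_succ_lt hlt)]
    exact ((P i).isChain_track hsz).getElem _ hlt
  refine ⟨inVD_of_snapDisjoint hpos hP fun j _ h => (P j).mem_edges_of_getD_track h,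
    inVD_of_snapDisjoint hpos hP fun j _ h => (P j).mem_edges_of_getD_track h,
    i, fun j hj => ?_, hM.ne.symm, hmin, hM⟩
  simp [trackState, Function.update_of_ne hj]

lemma reflTransGen_trackState (hpos : ∀ e, 0 < lam e) (hsz : s ≠ z)
    {P : Fin k → TPath G lam s z} (hP : ∀ i j, i ≠ j → SnapDisjoint (P i) (P j))
    (p : Fin k → ℕ) :
    Relation.ReflTransGen (DArc G lam s z) (trackState P p) (fun _ => .inr true) := by
  by_cases hdone : ∀ j, trackState P p j = .inr true
  · exact funext hdone ▸ .refl
  obtain ⟨j₀, hj₀⟩ := not_forall.1 hdone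
  obtain ⟨i, -, hmin⟩ := Finset.exists_min_image Finset.univ
    (fun j => lamF G lam (trackState P p j)) ⟨j₀, Finset.mem_univ _⟩
  have hi : trackState P p i ≠ .inr true := fun h =>
    hj₀ (eq_inr_of_lamF_eq hpos (le_antisymm (lamF_le_sup_add_one _)
      (h ▸ hmin j₀ (Finset.mem_univ _))))
  exact .head (dArc_trackState hpos hsz hP p hi fun j => hmin j (Finset.mem_univ _))
    (reflTransGen_trackState hpos hsz hP (Function.update p i (p i + 1)))
termination_by ∑ j, ((P j).track.length - p j)
decreasing_by
  have hlt := (P i).lt_length_track_of_getD_ne hi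
  refine Finset.sum_lt_sum (fun j _ => ?_) ⟨i, Finset.mem_univ _, ?_⟩
  · rcases eq_or_ne j i with rfl | hj
    · simp only [Function.update_self]; omega
    · simp [Function.update_of_ne hj]
  · simp only [Function.update_self]; omega

end Forward

section Backward

variable {G : Multigraph} {lam : G.E → ℕ} {s z : G.V} {k : ℕ}

def Incident (G : Multigraph) (s z : G.V) : G.E ⊕ Bool → G.V → Prop
  | .inl e, v => v ∈ G.ends e
  | .inr false, v => v = s
  | .inr true, v => v = z

lemma MArc.exists_tPath {a b : G.E ⊕ Bool} (h : MArc G lam s z a b) {v : G.V}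
    (hv : Incident G s z a v) (P : TPath G lam s v)
    (hle : ∀ x ∈ P.edges, lam x ≤ lamF G lam a) :
    ∃ w, Incident G s z b w ∧
      ∃ Q : TPath G lam s w, ∀ x ∈ Q.edges, x ∈ P.edges ∨ .inl x = a := by
  rcases a with e | _ | _ <;> rcases b with f | _ | _ <;> simp only [MArc] at h
  · obtain ⟨-, ⟨w, hwe, hwf⟩, -⟩ := h
    obtain ⟨Q, hQ⟩ := P.exists_of_mem_ends hv hwe hle
    exact ⟨w, hwf, Q, by simpa [eq_comm] using hQ⟩
  · obtain ⟨Q, hQ⟩ := P.exists_of_mem_ends hv h hle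
    exact ⟨z, rfl, Q, by simpa [eq_comm] using hQ⟩
  · exact ⟨v, (hv : v = s) ▸ h, P, fun x hx => Or.inl hx⟩

def edgeTimes (lam : G.E → ℕ) : G.E ⊕ Bool → Finset ℕ :=
  Sum.elim (fun e => {lam e}) fun _ => ∅

lemma eq_lamF_of_mem_edgeTimes {x : G.E ⊕ Bool} {t : ℕ} (h : t ∈ edgeTimes lam x) :
    t = lamF G lam x := by
  rcases x with e | _ <;> simp_all [edgeTimes, lamF]

/-- Invariant along a walk of `D` from `(s, …, s)`: `T j` collects the times of the edges
that coordinate `j` has visited. A time that coordinate `j` has already left was a minimum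
of the tuple when it was left, and times only grow along arcs of `M`; hence `le_of_lt`. -/
structure WalkInv (G : Multigraph) (lam : G.E → ℕ) (s z : G.V)
    (u : Fin k → G.E ⊕ Bool) (T : Fin k → Finset ℕ) : Prop where
  disjoint : ∀ i j, i ≠ j → Disjoint (T i) (T j)
  le_lamF : ∀ j, ∀ t ∈ T j, t ≤ lamF G lam (u j)
  lam_mem : ∀ j e, u j = .inl e → lam e ∈ T j
  le_of_lt : ∀ j, ∀ t ∈ T j, t < lamF G lam (u j) → ∀ j', t ≤ lamF G lam (u j')
  reach : ∀ j, ∃ v, Incident G s z (u j) v ∧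
    ∃ P : TPath G lam s v, ∀ x ∈ P.edges, lam x ∈ T j

lemma walkInv_start : WalkInv G lam s z (fun _ : Fin k => .inr false) fun _ => ∅ where
  disjoint _ _ _ := disjoint_bot_left
  le_lamF _ _ h := absurd h (Finset.notMem_empty _)
  lam_mem _ _ h := absurd h (by simp)
  le_of_lt _ _ h := absurd h (Finset.notMem_empty _)
  reach _ := ⟨s, rfl, TPath.nil s, fun _ h => absurd h List.not_mem_nil⟩

variable {u : Fin k → G.E ⊕ Bool} {T : Fin k → Finset ℕ} {i : Fin k} {b : G.E ⊕ Bool}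

lemma WalkInv.disjoint_edgeTimes (hpos : ∀ e, 0 < lam e) (hI : WalkInv G lam s z u T)
    (hM : MArc G lam s z (u i) b)
    (hD : InVD G lam (Function.update u i b)) {j : Fin k} (hj : j ≠ i) :
    Disjoint (T j) (edgeTimes lam b) := by
  rcases b with f | _
  swap
  · exact Finset.disjoint_empty_right _
  refine Finset.disjoint_singleton_right.2 fun hf => ?_
  rcases (hI.le_lamF j _ hf).lt_or_eq with hlt | heq
  · have hui : lamF G lam (u i) = lam f :=
      le_antisymm hM.lamF_le (hI.le_of_lt j _ hf hlt i)
    rcases hu : u i with e | _ | _ <;> rw [hu] at hui hM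
    · exact Finset.disjoint_left.1 (hI.disjoint i j hj.symm) (hI.lam_mem i e hu)
        (by rwa [show lam e = lam f from hui])
    · exact (hpos f).ne hui
    · exact hM
  · rcases hD i j hj.symm with hne | ⟨-, _, h⟩
    · simp only [Function.update_self, Function.update_of_ne hj] at hne
      exact hne heq
    · simp at h

lemma WalkInv.disjoint_update (hpos : ∀ e, 0 < lam e) (hI : WalkInv G lam s z u T)
    (hM : MArc G lam s z (u i) b) (hD : InVD G lam (Function.update u i b)) {a c : Fin k}
    (hac : a ≠ c) :
    Disjoint (Function.update T i (T i ∪ edgeTimes lam b) a)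
      (Function.update T i (T i ∪ edgeTimes lam b) c) := by
  rcases eq_or_ne a i with rfl | ha
  · simp only [Function.update_self, Function.update_of_ne hac.symm]
    exact Finset.disjoint_union_left.2 ⟨hI.disjoint a c hac,
      (hI.disjoint_edgeTimes hpos hM hD hac.symm).symm⟩
  rcases eq_or_ne c i with rfl | hc
  · simp only [Function.update_self, Function.update_of_ne ha]
    exact Finset.disjoint_union_right.2 ⟨hI.disjoint a c hac,
      hI.disjoint_edgeTimes hpos hM hD ha⟩
  · simpa only [Function.update_of_ne ha, Function.update_of_ne hc] using hI.disjoint a c hac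

lemma WalkInv.exists_tPath_of_mArc (hI : WalkInv G lam s z u T) (hM : MArc G lam s z (u i) b) :
    ∃ w, Incident G s z b w ∧ ∃ Q : TPath G lam s w, ∀ x ∈ Q.edges, lam x ∈ T i := by
  obtain ⟨v, hv, P, hP⟩ := hI.reach i
  obtain ⟨w, hw, Q, hQ⟩ := hM.exists_tPath hv P fun x hx => hI.le_lamF i _ (hP x hx)
  refine ⟨w, hw, Q, fun x hx => ?_⟩
  rcases hQ x hx with hx | hx
  · exact hP x hx
  · exact hI.lam_mem i x hx.symm

lemma WalkInv.update (hpos : ∀ e, 0 < lam e) (hI : WalkInv G lam s z u T)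
    (hmin : ∀ j, lamF G lam (u i) ≤ lamF G lam (u j)) (hM : MArc G lam s z (u i) b)
    (hD : InVD G lam (Function.update u i b)) :
    WalkInv G lam s z (Function.update u i b)
      (Function.update T i (T i ∪ edgeTimes lam b)) := by
  have hle := hM.lamF_le
  constructor
  · exact fun a c hac => hI.disjoint_update hpos hM hD hac
  · intro j t ht
    rcases eq_or_ne j i with rfl | hj
    · simp only [Function.update_self, Finset.mem_union] at ht ⊢
      rcases ht with ht | ht
      · exact (hI.le_lamF j t ht).trans hle
      · exact (eq_lamF_of_mem_edgeTimes ht).le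
    · simp only [Function.update_of_ne hj] at ht ⊢
      exact hI.le_lamF j t ht
  · intro j e he
    rcases eq_or_ne j i with rfl | hj
    · simp only [Function.update_self] at he ⊢
      simp [he, edgeTimes]
    · simp only [Function.update_of_ne hj] at he ⊢
      exact hI.lam_mem j e he
  · intro j t ht hlt j'
    have hmin' : lamF G lam (u i) ≤ lamF G lam (Function.update u i b j') := by
      rcases eq_or_ne j' i with rfl | hj'
      · simpa using hle
      · simpa [Function.update_of_ne hj'] using hmin j'
    rcases eq_or_ne j i with rfl | hj
    · simp only [Function.update_self, Finset.mem_union] at ht hlt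
      rcases ht with ht | ht
      · exact (hI.le_lamF j t ht).trans hmin'
      · exact absurd (eq_lamF_of_mem_edgeTimes ht) hlt.ne
    · simp only [Function.update_of_ne hj] at ht hlt
      rcases eq_or_ne j' i with rfl | hj'
      · exact (hI.le_of_lt j t ht hlt j').trans hmin'
      · simpa [Function.update_of_ne hj'] using hI.le_of_lt j t ht hlt j'
  · intro j
    rcases eq_or_ne j i with rfl | hj
    · obtain ⟨w, hw, Q, hQ⟩ := hI.exists_tPath_of_mArc hM
      exact ⟨w, by simpa using hw, Q, fun x hx => by simpa using Or.inl (hQ x hx)⟩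
    · simpa only [Function.update_of_ne hj] using hI.reach j

lemma WalkInv.exists_of_dArc (hpos : ∀ e, 0 < lam e) (hI : WalkInv G lam s z u T)
    {w : Fin k → G.E ⊕ Bool} (hA : DArc G lam s z u w) : ∃ T', WalkInv G lam s z w T' := by
  obtain ⟨-, hD, i, hframe, -, hmin, hM⟩ := hA
  have hw : w = Function.update u i (w i) := by
    funext j
    rcases eq_or_ne j i with rfl | hj
    · simp
    · simp [Function.update_of_ne hj, hframe j hj]
  rw [hw] at hD ⊢
  exact ⟨_, hI.update hpos hmin hM hD⟩

lemma exists_walkInv (hpos : ∀ e, 0 < lam e) {u : Fin k → G.E ⊕ Bool}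
    (h : Relation.ReflTransGen (DArc G lam s z) (fun _ => .inr false) u) :
    ∃ T, WalkInv G lam s z u T := by
  induction h with
  | refl => exact ⟨_, walkInv_start⟩
  | tail _ hA ih =>
    obtain ⟨T, hT⟩ := ih
    exact hT.exists_of_dArc hpos hA

end Backward

theorem stmt16_general (G : Multigraph) (lam : G.E → ℕ) (hpos : ∀ e, 0 < lam e)
    (s z : G.V) (hsz : s ≠ z) (k : ℕ) :
    (∃ f : Fin k → TPath G lam s z, ∀ i j, i ≠ j → SnapDisjoint (f i) (f j)) ↔
      Relation.ReflTransGen (DArc G lam s z (k := k))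
        (fun _ => Sum.inr false) (fun _ => Sum.inr true) := by
  constructor
  · rintro ⟨P, hP⟩
    have hstart : trackState P (fun _ => 0) = fun _ => .inr false := by
      funext j; simp [trackState, TPath.track]
    exact hstart ▸ reflTransGen_trackState hpos hsz hP _
  · intro h
    obtain ⟨T, hT⟩ := exists_walkInv hpos h
    choose v hv P hP using hT.reach
    obtain rfl : v = fun _ => z := funext hv
    refine ⟨P, fun i j hij => Set.eq_empty_iff_forall_notMem.2 ?_⟩
    rintro _ ⟨⟨a, ha, rfl⟩, ⟨b, hb, hba⟩⟩
    exact Finset.disjoint_left.1 (hT.disjoint i j hij) (hP i a ha) (hba ▸ hP j b hb)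

/-- `(G,λ)` contains `k` pairwise snapshot disjoint temporal `s,z`-paths iff
the digraph `D` contains a directed path from `s* = (s,…,s)` to `z* = (z,…,z)`. -/
theorem stmt16 (G : Multigraph) (lam : G.E → ℕ) (hpos : ∀ e, 0 < lam e)
    (hproper : ∀ e f, e ≠ f → G.ends e = G.ends f → lam e ≠ lam f)
    (s z : G.V) (hsz : s ≠ z) (k : ℕ) (hk : 1 ≤ k) :
    (∃ f : Fin k → TPath G lam s z, ∀ i j, i ≠ j → SnapDisjoint (f i) (f j)) ↔
      Relation.ReflTransGen (DArc G lam s z (k := k))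
        (fun _ => Sum.inr false) (fun _ => Sum.inr true) :=
  stmt16_general G lam hpos s z hsz k
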